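/- Fix \(D > 0\) and \(\Lambda_0 \in SO_3(\mathbb{R})\), let \(\mu\) be the Haar probability measure on \(SO_3(\mathbb{R})\), and define \(\Gamma_{\Lambda_0}(f) = \big(\int f\,\mathrm{d}\mu\big) M_{\Lambda_0} - f\) for \(f \in L^2(\mu)\). Define \(\mathrm{GCI}(\Lambda_0)\) as the set of \(\psi \in L^2(\mu)\) such that \(\int \Gamma_{\Lambda_0}(f)\,\psi\,\mathrm{d}\mu = 0\) for every \(f \in L^2(\mu)\) with \(\int f(A)\,\big(\tfrac{1}{2}\mathrm{Tr}(P^\mathsf{T}\Lambda_0^\mathsf{T} A)\big)\,\mathrm{d}\mu(A) = 0\) for all antisymmetric \(P\). Then \(\mathrm{GCI}(\Lambda_0)\) consists exactly of the functions of the form \(A \mapsto c + \tfrac{1}{2}\mathrm{Tr}(P^\mathsf{T}\Lambda_0^\mathsf{T} A)\) (\(\mu\)-almost everywhere) with \(c \in \mathbb{R}\) and \(P\) an antisymmetric matrix; i.e., \(\mathrm{GCI}(\Lambda_0)\) is the linear span of the constant function \(1\) and the functions \(\psi^P_{\Lambda_0}(A) = \tfrac{1}{2}\mathrm{Tr}(P^\mathsf{T}\Lambda_0^\mathsf{T}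 A)\) for \(P\) antisymmetric. -/

import Mathlib

open scoped Matrix
open MeasureTheory

noncomputable section

/-- The space of real 3×3 matrices. -/
abbrev Mat3 := Matrix (Fin 3) (Fin 3) ℝ

/-- The special orthogonal group `SO₃(ℝ)`. -/
def SO3T : Type := {A : Mat3 // Aᵀ * A = 1 ∧ A.det = 1}

namespace SO3T

instance : Group SO3T where
  mul A B := ⟨A.1 * B.1, by
    obtain ⟨hA1, hA2⟩ := A.2
    obtain ⟨hB1, hB2⟩ := B.2
    constructor
    · rw [Matrix.transpose_mul, Matrix.mul_assoc, ← Matrix.mul_assoc (A.1)ᵀ, hA1,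
        Matrix.one_mul, hB1]
    · rw [Matrix.det_mul, hA2, hB2, mul_one]⟩
  one := ⟨1, by simp⟩
  inv A := ⟨A.1ᵀ, by
    obtain ⟨hA1, hA2⟩ := A.2
    constructor
    · rw [Matrix.transpose_transpose]; exact mul_eq_one_comm.mp hA1
    · rw [Matrix.det_transpose]; exact hA2⟩
  mul_assoc a b c := Subtype.ext (mul_assoc a.1 b.1 c.1)
  one_mul a := Subtype.ext (one_mul a.1)
  mul_one a := Subtype.ext (mul_one a.1)
  inv_mul_cancel a := Subtype.ext a.2.1

instance : TopologicalSpace SO3T := instTopologicalSpaceSubtype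

instance : MeasurableSpace SO3T := borel SO3T

instance : BorelSpace SO3T := ⟨rfl⟩

end SO3T

/-!
Left invariance of a probability measure on the compact group `SO₃` forces right and inversion
invariance. Multiplying by the diagonal rotations `diag(±1)` and by a cyclic permutation matrix then
gives the moments `∫ A_ij = 0` and `∫ A_ij A_kl = δ_ik δ_jl / 3`, and inversion (`Tr Aᵀ = Tr A`)
makes `∫ g(Tr A) A dμ` a symmetric matrix. Hence the functions `ψ^P` have mean zero, Gram matrix
`∫ ψ^P ψ^Q = Tr(Pᵀ Q) / 12`, and are orthogonal to `M_{Λ₀}`.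

If `∫ f = 0` then `Γ(f) = -f`, so a GCI `ψ` is orthogonal to every `f ⊥ span {1, ψ^P}`. Taking
`f = ψ - ∫ ψ - ψ^P`, with `ψ^P` the orthogonal projection of `ψ` onto the `ψ^Q`, gives
`∫ f² = 0`. Conversely, `∫ M_{Λ₀} = 1` and `∫ M_{Λ₀} ψ^P = 0` give
`∫ Γ(f) (c + ψ^P) = -∫ f ψ^P = 0` for every `f ⊥ ψ^P`.
-/

open Matrix

lemma Matrix.trace_transpose_mul_eq_zero {n : Type*} [Fintype n] {P S : Matrix n n ℝ}
    (hP : Pᵀ = -P) (hS : Sᵀ = S) : trace (Pᵀ * S) = 0 := by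
  have h : trace (Pᵀ * S) = -trace (Pᵀ * S) := by
    conv_lhs => rw [← trace_transpose, transpose_mul, hS, transpose_transpose, trace_mul_comm]
    rw [hP, neg_mul, trace_neg, neg_neg]
  linarith

lemma MeasureTheory.integral_trace_transpose_mul {α m n : Type*} [MeasurableSpace α]
    {μ : Measure α} [Fintype m] [Fintype n] (Q : Matrix m n ℝ) {F : α → Matrix m n ℝ}
    (hF : ∀ i j, Integrable (fun a => F a i j) μ) :
    ∫ a, trace (Qᵀ * F a) ∂μ = trace (Qᵀ * of fun i j => ∫ a, F a i j ∂μ) := by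
  simp only [trace, diag, mul_apply, transpose_apply, of_apply]
  rw [integral_finsetSum _ fun j _ => integrable_finsetSum _ fun i _ => (hF i j).const_mul _]
  refine Finset.sum_congr rfl fun j _ => ?_
  rw [integral_finsetSum _ fun i _ => (hF i j).const_mul _]
  simp only [integral_const_mul]

lemma MeasureTheory.integral_jump_mul_eq_zero {α : Type*} [MeasurableSpace α] {μ : Measure α}
    [IsProbabilityMeasure μ] {M φ f ψ : α → ℝ} {c : ℝ} (hM : MemLp M ⊤ μ) (hφ : MemLp φ ⊤ μ)
    (hf : Integrable f μ) (hM1 : ∫ a, M a ∂μ = 1) (hφM : ∫ a, φ a * M a ∂μ = 0)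
    (hfφ : ∫ a, f a * φ a ∂μ = 0) (hψ : ∀ᵐ a ∂μ, ψ a = c + φ a) :
    ∫ a, ((∫ b, f b ∂μ) * M a - f a) * ψ a ∂μ = 0 := by
  have hMi : Integrable M μ := hM.integrable le_top
  have hφMi : Integrable (fun a => φ a * M a) μ := hMi.mul_of_top_right hφ
  have hfφi : Integrable (fun a => f a * φ a) μ := hf.mul_of_top_left hφ
  have hMsum : Integrable (fun a => c * M a + φ a * M a) μ := (hMi.const_mul c).add hφMi
  have hfsum : Integrable (fun a => c * f a + f a * φ a) μ := (hf.const_mul c).add hfφi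
  calc ∫ a, ((∫ b, f b ∂μ) * M a - f a) * ψ a ∂μ
      = ∫ a, ((∫ b, f b ∂μ) * (c * M a + φ a * M a) - (c * f a + f a * φ a)) ∂μ :=
        integral_congr_ae <| hψ.mono fun a ha => by simp only [ha]; ring
    _ = (∫ b, f b ∂μ) * (c * ∫ a, M a ∂μ + ∫ a, φ a * M a ∂μ)
          - (c * ∫ a, f a ∂μ + ∫ a, f a * φ a ∂μ) := by
        rw [integral_sub (hMsum.const_mul _) hfsum, integral_const_mul,
          integral_add (hMi.const_mul c) hφMi, integral_add (hf.const_mul c) hfφi,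
          integral_const_mul, integral_const_mul]
    _ = 0 := by rw [hM1, hφM, hfφ]; ring

lemma MeasureTheory.integral_mul_sub_const_sub {α : Type*} [MeasurableSpace α] {μ : Measure α}
    [IsFiniteMeasure μ] {g u v : α → ℝ} (c : ℝ) (hg : MemLp g 2 μ) (hu : MemLp u 2 μ)
    (hv : MemLp v 2 μ) :
    ∫ a, g a * (u a - c - v a) ∂μ
      = ∫ a, g a * u a ∂μ - c * ∫ a, g a ∂μ - ∫ a, g a * v a ∂μ := by
  have hgu : Integrable (fun a => g a * u a) μ := hg.integrable_mul hu
  have hgc : Integrable (fun a => c * g a) μ := (hg.integrable one_le_two).const_mul c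
  have hguc : Integrable (fun a => g a * u a - c * g a) μ := hgu.sub hgc
  have hgv : Integrable (fun a => g a * v a) μ := hg.integrable_mul hv
  calc ∫ a, g a * (u a - c - v a) ∂μ = ∫ a, g a * u a - c * g a - g a * v a ∂μ := by
        congr 1; ext a; ring
    _ = _ := by rw [integral_sub hguc hgv, integral_sub hgu hgc, integral_const_mul]

namespace MeasureTheory.Measure

variable {G : Type*} [Group G] [TopologicalSpace G] [IsTopologicalGroup G] [CompactSpace G]
  [MeasurableSpace G] [BorelSpace G] (μ : Measure G) [IsProbabilityMeasure μ] [μ.IsMulLeftInvariant]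

lemma isHaarMeasure_of_isProbabilityMeasure : μ.IsHaarMeasure :=
  isHaarMeasure_of_isCompact_nonempty_interior μ Set.univ isCompact_univ (by simp) (by simp)
    (by simp)

lemma isMulRightInvariant_of_compactSpace : μ.IsMulRightInvariant := by
  have := isHaarMeasure_of_isProbabilityMeasure μ
  refine ⟨fun g => ?_⟩
  have : IsProbabilityMeasure (μ.map (· * g)) := isProbabilityMeasure_map (by fun_prop)
  exact isHaarMeasure_eq_of_isProbabilityMeasure _ μ

lemma isInvInvariant_of_compactSpace : μ.IsInvInvariant := by
  have := isHaarMeasure_of_isProbabilityMeasure μ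
  have := isMulRightInvariant_of_compactSpace μ
  have : IsProbabilityMeasure μ.inv := isProbabilityMeasure_map (by fun_prop)
  have : μ.inv.IsHaarMeasure := {}
  exact ⟨isHaarMeasure_eq_of_isProbabilityMeasure _ μ⟩

end MeasureTheory.Measure

namespace SO3T

@[simp] lemma val_mul (A B : SO3T) : (A * B).val = A.val * B.val := rfl

@[simp] lemma val_inv (A : SO3T) : (A⁻¹).val = A.valᵀ := rfl

lemma trace_transpose_val_mul_val_mul (Λ A : SO3T) :
    trace (Λ.valᵀ * (Λ * A).val) = trace A.val := by
  rw [val_mul, ← Matrix.mul_assoc, Λ.2.1, Matrix.one_mul]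

lemma sum_val_apply_sq (A : SO3T) (j : Fin 3) : ∑ i, A.val i j ^ 2 = 1 := by
  simpa [mul_apply, one_apply, sq] using congrFun (congrFun A.2.1 j) j

lemma abs_val_apply_le_one (A : SO3T) (i j : Fin 3) : |A.val i j| ≤ 1 := by
  rw [← sq_le_one_iff_abs_le_one]
  exact (Finset.single_le_sum (fun k _ => sq_nonneg (A.val k j)) (Finset.mem_univ i)).trans_eq
    (sum_val_apply_sq A j)

@[fun_prop]
lemma continuous_val : Continuous (fun A : SO3T => A.val) := continuous_subtype_val

@[fun_prop]
lemma continuous_val_apply (i j : Fin 3) : Continuous fun A : SO3T => A.val i j :=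
  continuous_val.matrix_elem i j

instance : IsTopologicalGroup SO3T where
  continuous_mul := (continuous_val.fst'.matrix_mul continuous_val.snd').subtype_mk _
  continuous_inv := continuous_val.matrix_transpose.subtype_mk _

instance : CompactSpace SO3T := by
  have hclosed : IsClosed {A : Mat3 | Aᵀ * A = 1 ∧ A.det = 1} :=
    (isClosed_eq (by fun_prop) continuous_const).inter (isClosed_eq (by fun_prop) continuous_const)
  have hbounded : {A : Mat3 | Aᵀ * A = 1 ∧ A.det = 1} ⊆
      Set.univ.pi fun _ => Set.univ.pi fun _ => Set.Icc (-1 : ℝ) 1 :=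
    fun A hA i _ j _ => abs_le.mp (abs_val_apply_le_one ⟨A, hA⟩ i j)
  exact isCompact_iff_compactSpace.mp <|
    (isCompact_univ_pi fun _ => isCompact_univ_pi fun _ => isCompact_Icc).of_isClosed_subset
      hclosed hbounded

def rotationPi (k : Fin 3) : SO3T :=
  ⟨diagonal fun m => if m = k then 1 else -1, by
    refine ⟨?_, ?_⟩
    · rw [diagonal_transpose, diagonal_mul_diagonal, ← diagonal_one]
      congr 1
      ext m
      split_ifs <;> norm_num
    · rw [det_diagonal, Fin.prod_univ_three]
      fin_cases k <;> simp⟩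

lemma val_rotationPi_mul_apply (k : Fin 3) (A : SO3T) (i j : Fin 3) :
    (rotationPi k * A).val i j = (if i = k then 1 else -1) * A.val i j :=
  diagonal_mul _ _ _ _

def cycle : SO3T :=
  ⟨!![0, 1, 0; 0, 0, 1; 1, 0, 0], by
    refine ⟨?_, ?_⟩
    · ext i j; fin_cases i <;> fin_cases j <;> simp [mul_apply, Fin.sum_univ_three]
    · simp [det_fin_three]⟩

lemma val_cycle_mul_apply (A : SO3T) (i j : Fin 3) :
    (cycle * A).val i j = A.val (finRotate 3 i) j := by
  rw [val_mul]
  fin_cases i <;> simp [cycle, mul_apply, Fin.sum_univ_three]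

section Integrals

variable {μ : Measure SO3T}

lemma memLp_of_continuous [IsFiniteMeasure μ] {f : SO3T → ℝ} (hf : Continuous f) {p : ENNReal} :
    MemLp f p μ :=
  hf.memLp_of_hasCompactSupport (.of_compactSpace f)

lemma integrable_of_continuous [IsFiniteMeasure μ] {f : SO3T → ℝ} (hf : Continuous f) :
    Integrable f μ :=
  hf.integrable_of_hasCompactSupport (.of_compactSpace f)

lemma integrable_val_apply_mul {w : SO3T → ℝ} (hw : Integrable w μ) (i j : Fin 3) :
    Integrable (fun A => A.val i j * w A) μ :=
  hw.bdd_mul (continuous_val_apply i j).aestronglyMeasurable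
    (.of_forall fun A => abs_val_apply_le_one A i j)

lemma integral_trace_transpose_mul_val_mul {w : SO3T → ℝ} (hw : Integrable w μ) (R : Mat3) :
    ∫ A, trace (Rᵀ * A.val) * w A ∂μ = trace (Rᵀ * of fun i j => ∫ A, A.val i j * w A ∂μ) := by
  have h := integral_trace_transpose_mul R (F := fun A => w A • A.val) fun i j => by
    simpa only [Matrix.smul_apply, smul_eq_mul, mul_comm] using integrable_val_apply_mul hw i j
  simpa only [Matrix.smul_apply, smul_eq_mul, mul_smul_comm, trace_smul, mul_comm (w _)] using h

lemma integral_val_apply_mul_comm [μ.IsInvInvariant] (g : ℝ → ℝ) (i j : Fin 3) :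
    ∫ A, A.val i j * g (trace A.val) ∂μ = ∫ A, A.val j i * g (trace A.val) ∂μ := by
  rw [← integral_inv_eq_self]
  simp

lemma integral_trace_mul_comp_trace_eq_zero [IsFiniteMeasure μ] [μ.IsInvInvariant] {g : ℝ → ℝ}
    (hg : Continuous g) {P : Mat3} (hP : Pᵀ = -P) :
    ∫ A, trace (Pᵀ * A.val) * g (trace A.val) ∂μ = 0 := by
  rw [integral_trace_transpose_mul_val_mul (integrable_of_continuous (by fun_prop))]
  refine trace_transpose_mul_eq_zero hP ?_
  ext i j
  simp [integral_val_apply_mul_comm g j i]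

variable [μ.IsMulLeftInvariant]

lemma integral_val_apply (i j : Fin 3) : ∫ A, A.val i j ∂μ = 0 := by
  obtain ⟨k, hk⟩ := exists_ne i
  have h := integral_mul_left_eq_self (μ := μ) (fun A => A.val i j) (rotationPi k)
  simp only [val_rotationPi_mul_apply, hk.symm, ↓reduceIte, neg_one_mul, integral_neg] at h
  linarith

lemma integral_val_apply_mul_val_apply_of_ne_left {i k : Fin 3} (hik : i ≠ k) (j l : Fin 3) :
    ∫ A, A.val i j * A.val k l ∂μ = 0 := by
  have h := integral_mul_left_eq_self (μ := μ) (fun A => A.val i j * A.val k l) (rotationPi k)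
  simp only [val_rotationPi_mul_apply, hik, ↓reduceIte, one_mul, neg_mul,
    integral_neg] at h
  linarith

lemma integral_val_apply_mul_val_apply_of_ne_right [μ.IsInvInvariant] {j l : Fin 3} (hjl : j ≠ l)
    (i k : Fin 3) : ∫ A, A.val i j * A.val k l ∂μ = 0 := by
  rw [← integral_inv_eq_self]
  exact integral_val_apply_mul_val_apply_of_ne_left hjl i k

lemma integral_val_apply_sq [IsProbabilityMeasure μ] (i j : Fin 3) :
    ∫ A, A.val i j ^ 2 ∂μ = 1 / 3 := by
  have hcycle (i : Fin 3) : ∫ A, A.val (finRotate 3 i) j ^ 2 ∂μ = ∫ A, A.val i j ^ 2 ∂μ := by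
    simpa only [val_cycle_mul_apply] using
      integral_mul_left_eq_self (μ := μ) (fun A => A.val i j ^ 2) cycle
  have hsum : ∑ i, ∫ A, A.val i j ^ 2 ∂μ = 1 := by
    rw [← integral_finsetSum _ fun i _ => integrable_of_continuous (by fun_prop)]
    simp [sum_val_apply_sq]
  have h0 := hcycle 0
  have h1 := hcycle 1
  simp only [Fin.sum_univ_three] at hsum
  fin_cases i <;> simp_all <;> linarith

lemma of_integral_val_apply_mul_val_apply [IsProbabilityMeasure μ] [μ.IsInvInvariant]
    (i j : Fin 3) : of (fun k l => ∫ A, A.val k l * A.val i j ∂μ) = single i j (1 / 3) := by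
  ext k l
  rw [of_apply, single_apply]
  by_cases hik : i = k
  · by_cases hjl : j = l
    · subst hik hjl
      simpa [← sq] using integral_val_apply_sq i j
    · simp [hjl, integral_val_apply_mul_val_apply_of_ne_right (Ne.symm hjl)]
  · simp [hik, integral_val_apply_mul_val_apply_of_ne_left (Ne.symm hik)]

lemma integral_trace_transpose_mul_val [IsFiniteMeasure μ] (P : Mat3) :
    ∫ A, trace (Pᵀ * A.val) ∂μ = 0 := by
  have h : (of fun i j => ∫ A, A.val i j ∂μ) = 0 := by
    ext i j
    simp [integral_val_apply]
  rw [integral_trace_transpose_mul P fun i j => integrable_of_continuous (continuous_val_apply i j),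
    h, mul_zero, trace_zero]

lemma integral_trace_mul_trace [IsProbabilityMeasure μ] [μ.IsInvInvariant] (P Q : Mat3) :
    ∫ A, trace (Pᵀ * A.val) * trace (Qᵀ * A.val) ∂μ = trace (Pᵀ * Q) / 3 := by
  have hcoeff : (of fun i j => ∫ A, A.val i j * trace (Qᵀ * A.val) ∂μ) = (1 / 3 : ℝ) • Q := by
    ext i j
    simp_rw [of_apply, mul_comm _ (trace _)]
    rw [integral_trace_transpose_mul_val_mul (integrable_of_continuous (continuous_val_apply i j)),
      of_integral_val_apply_mul_val_apply, trace_mul_single]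
    simp [mul_comm]
  rw [integral_trace_transpose_mul_val_mul (integrable_of_continuous (by fun_prop)), hcoeff,
    mul_smul_comm, trace_smul, smul_eq_mul]
  ring

end Integrals

end SO3T

/-- The function `ψ^P_Λ` of the paper. -/
def gciPsi (Λ : SO3T) (P : Mat3) (A : SO3T) : ℝ := (1 / 2 : ℝ) * trace (Pᵀ * (Λ.val)ᵀ * A.val)

lemma gciPsi_mul_left (Λ : SO3T) (P : Mat3) (A : SO3T) :
    gciPsi Λ P (Λ * A) = trace (Pᵀ * A.val) / 2 := by
  rw [gciPsi, Matrix.mul_assoc, SO3T.val_mul, ← Matrix.mul_assoc Λ.valᵀ, Λ.2.1, Matrix.one_mul]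
  ring

@[fun_prop]
lemma continuous_gciPsi (Λ : SO3T) (P : Mat3) : Continuous (gciPsi Λ P) := by
  unfold gciPsi
  fun_prop

section

variable {μ : Measure SO3T} [IsProbabilityMeasure μ] [μ.IsMulLeftInvariant] (Λ : SO3T)

lemma integral_inv_mul_exp_trace (t : ℝ) :
    ∫ A, (∫ B, Real.exp (t * trace B.val) ∂μ)⁻¹ * Real.exp (t * trace (Λ.valᵀ * A.val)) ∂μ
      = 1 := by
  have hpos : 0 < ∫ B, Real.exp (t * trace B.val) ∂μ :=
    integral_exp_pos (SO3T.integrable_of_continuous (by fun_prop))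
  rw [integral_const_mul,
    ← integral_mul_left_eq_self (fun A => Real.exp (t * trace (Λ.valᵀ * A.val))) Λ]
  simp only [SO3T.trace_transpose_val_mul_val_mul]
  exact inv_mul_cancel₀ hpos.ne'

lemma integral_gciPsi (P : Mat3) : ∫ A, gciPsi Λ P A ∂μ = 0 := by
  rw [← integral_mul_left_eq_self (gciPsi Λ P) Λ]
  simp only [gciPsi_mul_left, integral_div, SO3T.integral_trace_transpose_mul_val, zero_div]

variable [μ.IsInvInvariant]

lemma integral_gciPsi_mul_gciPsi (P Q : Mat3) :
    ∫ A, gciPsi Λ P A * gciPsi Λ Q A ∂μ = trace (Pᵀ * Q) / 12 := by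
  rw [← integral_mul_left_eq_self (fun A => gciPsi Λ P A * gciPsi Λ Q A) Λ]
  simp only [gciPsi_mul_left, div_mul_div_comm, integral_div, SO3T.integral_trace_mul_trace]
  ring

lemma integral_gciPsi_mul_exp (t : ℝ) {P : Mat3} (hP : Pᵀ = -P) :
    ∫ A, gciPsi Λ P A * Real.exp (t * trace (Λ.valᵀ * A.val)) ∂μ = 0 := by
  rw [← integral_mul_left_eq_self
    (fun A => gciPsi Λ P A * Real.exp (t * trace (Λ.valᵀ * A.val))) Λ]
  simp only [gciPsi_mul_left, SO3T.trace_transpose_val_mul_val_mul, div_mul_eq_mul_div,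
    integral_div, zero_div,
    SO3T.integral_trace_mul_comp_trace_eq_zero (g := fun s => Real.exp (t * s)) (by fun_prop) hP]

lemma exists_antisymm_integral_mul_gciPsi_eq {ψ : SO3T → ℝ} (hψ : Integrable ψ μ) :
    ∃ P : Mat3, Pᵀ = -P ∧ ∀ Q : Mat3, Qᵀ = -Q →
      ∫ A, gciPsi Λ Q A * ψ A ∂μ = ∫ A, gciPsi Λ Q A * gciPsi Λ P A ∂μ := by
  set m : Mat3 := of fun i j => ∫ A, A.val i j * ψ (Λ * A) ∂μ
  have hpair (Q : Mat3) : ∫ A, gciPsi Λ Q A * ψ A ∂μ = trace (Qᵀ * m) / 2 := by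
    rw [← integral_mul_left_eq_self (fun A => gciPsi Λ Q A * ψ A) Λ]
    simp only [gciPsi_mul_left, div_mul_eq_mul_div, integral_div]
    rw [SO3T.integral_trace_transpose_mul_val_mul (hψ.comp_mul_left Λ)]
  refine ⟨(3 : ℝ) • (m - mᵀ), ?_, fun Q hQ => ?_⟩
  · rw [transpose_smul, transpose_sub, transpose_transpose, ← smul_neg, neg_sub]
  · -- `6 m - P = 3 (m + mᵀ)` is symmetric, hence orthogonal to `Q`
    have hsymm := trace_transpose_mul_eq_zero hQ
      (S := (6 : ℝ) • m - (3 : ℝ) • (m - mᵀ)) (by ext i j; simp; ring)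
    rw [hpair, integral_gciPsi_mul_gciPsi]
    simp only [Matrix.mul_sub, Matrix.mul_smul, trace_sub, trace_smul, smul_eq_mul] at hsymm ⊢
    linarith

lemma exists_ae_eq_add_gciPsi {ψ : SO3T → ℝ} (hψ : MemLp ψ 2 μ)
    (H : ∀ f : SO3T → ℝ, MemLp f 2 μ → ∫ A, f A ∂μ = 0 →
      (∀ Q : Mat3, Qᵀ = -Q → ∫ A, f A * gciPsi Λ Q A ∂μ = 0) → ∫ A, f A * ψ A ∂μ = 0) :
    ∃ (c : ℝ) (P : Mat3), Pᵀ = -P ∧ ∀ᵐ A ∂μ, ψ A = c + gciPsi Λ P A := by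
  have hφ (Q : Mat3) : MemLp (gciPsi Λ Q) 2 μ := SO3T.memLp_of_continuous (continuous_gciPsi Λ Q)
  obtain ⟨P, hP, hproj⟩ := exists_antisymm_integral_mul_gciPsi_eq Λ (hψ.integrable one_le_two)
  set c := ∫ A, ψ A ∂μ
  set f : SO3T → ℝ := fun A => ψ A - c - gciPsi Λ P A with hf_def
  have hf : MemLp f 2 μ := (hψ.sub (memLp_const c)).sub (hφ P)
  have hf0 : ∫ A, f A ∂μ = 0 := by
    simpa [c, integral_gciPsi] using integral_mul_sub_const_sub c (memLp_const 1) hψ (hφ P)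
  have hfφ (Q : Mat3) (hQ : Qᵀ = -Q) : ∫ A, f A * gciPsi Λ Q A ∂μ = 0 := by
    simp_rw [mul_comm (f _)]
    rw [integral_mul_sub_const_sub c (hφ Q) hψ (hφ P), hproj Q hQ, integral_gciPsi]
    ring
  have hff : ∫ A, f A * f A ∂μ = 0 := by
    rw [integral_mul_sub_const_sub c hf hψ (hφ P), H f hf hf0 hfφ, hf0, hfφ P hP]
    ring
  have hfae : f =ᵐ[μ] 0 := by
    filter_upwards [(integral_eq_zero_iff_of_nonneg (fun A => mul_self_nonneg (f A))
      (hf.integrable_mul hf)).mp hff] with A hA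
    exact mul_self_eq_zero.mp hA
  refine ⟨c, P, hP, hfae.mono fun A hA => ?_⟩
  simp only [hf_def, Pi.zero_apply] at hA
  linarith

end

theorem GCI_description_jump_model_general (D : ℝ)
    (μ : Measure SO3T) [IsProbabilityMeasure μ]
    (hinv : ∀ g : SO3T, μ.map (fun A => g * A) = μ)
    (Z : ℝ) (hZ : Z = ∫ A : SO3T, Real.exp (1 / (2 * D) * Matrix.trace A.val) ∂μ)
    (Λ0 : SO3T) (ψ : SO3T → ℝ) (hψ : MemLp ψ 2 μ) :
    (∀ f : SO3T → ℝ, MemLp f 2 μ →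
        (∀ P : Mat3, Pᵀ = -P →
          ∫ A, f A * ((1 / 2 : ℝ) * Matrix.trace (Pᵀ * (Λ0.val)ᵀ * A.val)) ∂μ = 0) →
        ∫ A, ((∫ B, f B ∂μ) *
            (Z⁻¹ * Real.exp (1 / (2 * D) * Matrix.trace ((Λ0.val)ᵀ * A.val))) - f A) * ψ A ∂μ
          = 0)
      ↔ ∃ (c : ℝ) (P : Mat3), Pᵀ = -P ∧
          ∀ᵐ A ∂μ, ψ A = c + (1 / 2 : ℝ) * Matrix.trace (Pᵀ * (Λ0.val)ᵀ * A.val) := by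
  have : μ.IsMulLeftInvariant := ⟨hinv⟩
  have := μ.isInvInvariant_of_compactSpace
  subst hZ
  refine ⟨fun H => exists_ae_eq_add_gciPsi Λ0 hψ fun f hf hf0 hfφ => ?_,
    fun ⟨c, P, hP, hψP⟩ f hf hfφ => ?_⟩
  · simpa [hf0, integral_neg] using H f hf hfφ
  · refine integral_jump_mul_eq_zero (φ := gciPsi Λ0 P) (SO3T.memLp_of_continuous (by fun_prop))
      (SO3T.memLp_of_continuous (continuous_gciPsi Λ0 P)) (hf.integrable one_le_two)
      (integral_inv_mul_exp_trace Λ0 _) ?_ (hfφ P hP) hψP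
    simp only [mul_left_comm (gciPsi Λ0 P _), integral_const_mul, integral_gciPsi_mul_exp Λ0 _ hP,
      mul_zero]

/-- Description of the set of Generalized Collision Invariants of the jump collision operator
`Γ_{Λ₀}(f) = (∫ f dμ) M_{Λ₀} - f`: a function `ψ ∈ L²(μ)` is a GCI associated with
`Λ₀ ∈ SO₃(ℝ)` if and only if it is (μ-a.e.) of the form `A ↦ c + ½ Tr(Pᵀ Λ₀ᵀ A)` for some
`c ∈ ℝ` and some antisymmetric matrix `P`; i.e. `GCI(Λ₀)` is the linear span of the constant
function `1` and the functions `ψ^P_{Λ₀}(A) = ½ Tr(Pᵀ Λ₀ᵀ A)`, `P` antisymmetric.  Here `μ`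
is the Haar probability measure of `SO₃(ℝ)` (characterized by left invariance) and
`M_Λ(A) = Z⁻¹ exp(Tr(Λᵀ A)/(2D))`. -/
theorem GCI_description_jump_model (D : ℝ) (hD : 0 < D)
    (μ : Measure SO3T) [IsProbabilityMeasure μ]
    (hinv : ∀ g : SO3T, μ.map (fun A => g * A) = μ)
    (Z : ℝ) (hZ : Z = ∫ A : SO3T, Real.exp (1 / (2 * D) * Matrix.trace A.val) ∂μ)
    (Λ0 : SO3T) (ψ : SO3T → ℝ) (hψ : MemLp ψ 2 μ) :
    (∀ f : SO3T → ℝ, MemLp f 2 μ →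
        (∀ P : Mat3, Pᵀ = -P →
          ∫ A, f A * ((1 / 2 : ℝ) * Matrix.trace (Pᵀ * (Λ0.val)ᵀ * A.val)) ∂μ = 0) →
        ∫ A, ((∫ B, f B ∂μ) *
            (Z⁻¹ * Real.exp (1 / (2 * D) * Matrix.trace ((Λ0.val)ᵀ * A.val))) - f A) * ψ A ∂μ
          = 0)
      ↔ ∃ (c : ℝ) (P : Mat3), Pᵀ = -P ∧
          ∀ᵐ A ∂μ, ψ A = c + (1 / 2 : ℝ) * Matrix.trace (Pᵀ * (Λ0.val)ᵀ * A.val) :=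
  GCI_description_jump_model_general D μ hinv Z hZ Λ0 ψ hψ
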